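/- arXiv:0902.2535 — 3 statements merged into one kernel-verified Lean document; each statement's English description precedes it below -/
import Mathlib

section
/- The derivation actions of Π and 2Φ on Φ coincide: Π.Φ = 2(Φ.Φ). -/
open scoped RealInnerProductSpace

noncomputable section

variable {V : Type*} [NormedAddCommGroup V] [InnerProductSpace ℝ V] [FiniteDimensional ℝ V]

/-- The orthogonal projection onto `D`, as a map `V → V`. -/
def projD (D : Submodule ℝ V) (X : V) : V := (D.orthogonalProjectionOnto X : V)

/-- The bilinear form `h(X,Y) = ⟪πX, πY⟫`. -/
def hForm (D : Submodule ℝ V) (X Y : V) : ℝ := ⟪projD D X, projD D Y⟫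

/-- The 2-form `ω(X,Y) = h(JX, Y)`. -/
def omForm (J : V →ₗ[ℝ] V) (D : Submodule ℝ V) (X Y : V) : ℝ := hForm D (J X) Y

/-- The standard Kähler curvature-type tensor `Π` of constant holomorphic sectional curvature. -/
def PiT (J : V →ₗ[ℝ] V) (U Vv W : V) : V :=
  (1/4 : ℝ) • (⟪Vv, W⟫ • U - ⟪U, W⟫ • Vv + ⟪J Vv, W⟫ • J U - ⟪J U, W⟫ • J Vv
    - (2 * ⟪J U, Vv⟫) • J W)

/-- The curvature-type tensor `Φ`. -/
def PhiT (J : V →ₗ[ℝ] V) (D : Submodule ℝ V) (U Vv W : V) : V :=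
  (1/8 : ℝ) • (⟪Vv, W⟫ • projD D U - ⟪U, W⟫ • projD D Vv
    + hForm D Vv W • U - hForm D U W • Vv
    + ⟪J Vv, W⟫ • projD D (J U) - ⟪J U, W⟫ • projD D (J Vv)
    + omForm J D Vv W • J U - omForm J D U W • J Vv
    - (2 * ⟪J U, Vv⟫) • projD D (J W) - (2 * omForm J D U Vv) • J W)

/-- The curvature-type tensor `Ψ(U,V)W = −ω(U,V)·J(πW)`. -/
def PsiT (J : V →ₗ[ℝ] V) (D : Submodule ℝ V) (U Vv W : V) : V :=
  -(omForm J D U Vv) • J (projD D W)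

/-- The derivation action of an endomorphism `A` on a bilinear form `T`. -/
def der2 (A : V → V) (T : V → V → ℝ) (X Y : V) : ℝ := -T (A X) Y - T X (A Y)

/-- The derivation action of an endomorphism `A` on a 4-multilinear form `T`. -/
def der4 (A : V → V) (T : V → V → V → V → ℝ) (X Y Z W : V) : ℝ :=
  -T (A X) Y Z W - T X (A Y) Z W - T X Y (A Z) W - T X Y Z (A W)

/-- The 4-form `S₀(X,Y,Z,W) = ⟪S(X,Y)Z, W⟫` associated with an endomorphism-valued 2-form. -/
def form4 (S : V → V → V → V) (X Y Z W : V) : ℝ := ⟪S X Y Z, W⟫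

/-- The 6-multilinear form `(R.S)(U,V,X,Y,Z,W) = (R(U,V).S₀)(X,Y,Z,W)`. -/
def dotRS (R S : V → V → V → V) (U Vv X Y Z W : V) : ℝ :=
  der4 (R U Vv) (form4 S) X Y Z W

/-! The operator `Π(U,V) - 2Φ(U,V)` equals `Π_{Dᗮ}(U,V) - Π_D(U,V)`, where `Π_E` is the tensor `Π`
built on the `J`-invariant subspace `E` from the `E`-components of its arguments. Hence it is
skew-adjoint and commutes with `J` and with the projection `π` onto `D`, so it annihilates the four
2-forms `⟪·,·⟫`, `h`, `⟪J·,·⟫` and `ω`, i.e. `Π(U,V)` and `2Φ(U,V)` act on them in the same way.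
Since `Φ₀` is a combination of Kulkarni–Nomizu and symmetric products of these 2-forms, the Leibniz
rule for the derivation action transfers this to `Φ₀`. -/

theorem Submodule.starProjection_starProjection {V : Type*} [NormedAddCommGroup V]
    [InnerProductSpace ℝ V] (K : Submodule ℝ V) [K.HasOrthogonalProjection] (x : V) :
    K.starProjection (K.starProjection x) = K.starProjection x :=
  K.starProjection_eq_self_iff.mpr (K.starProjection_apply_mem x)

section ComplexStructure

variable {V : Type*} [NormedAddCommGroup V] [InnerProductSpace ℝ V]
  {J : V →ₗ[ℝ] V} (hJ2 : ∀ X : V, J (J X) = -X) (hJg : ∀ X Y : V, ⟪J X, J Y⟫ = ⟪X, Y⟫)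
include hJ2 hJg

theorem inner_map_left_eq_neg (x y : V) : ⟪J x, y⟫ = -⟪x, J y⟫ := by
  rw [← hJg x (J y), hJ2, inner_neg_right, neg_neg]

theorem inner_PiT_left (U Vv x y : V) : ⟪PiT J U Vv x, y⟫ = -⟪x, PiT J U Vv y⟫ := by
  simp only [PiT, inner_add_left, inner_add_right, inner_sub_left, inner_sub_right,
    real_inner_smul_left, real_inner_smul_right, inner_map_left_eq_neg hJ2 hJg x y,
    real_inner_comm (J U) x, real_inner_comm (J Vv) x, real_inner_comm U x, real_inner_comm Vv x]
  ring

theorem PiT_map (U Vv x : V) : PiT J U Vv (J x) = J (PiT J U Vv x) := by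
  simp only [PiT, map_smul, map_add, map_sub, hJ2, hJg, inner_map_left_eq_neg hJ2 hJg Vv,
    inner_map_left_eq_neg hJ2 hJg U]
  module

end ComplexStructure

theorem PiT_mem {V : Type*} [NormedAddCommGroup V] [InnerProductSpace ℝ V] {J : V →ₗ[ℝ] V}
    {E : Submodule ℝ V} (hJE : ∀ X ∈ E, J X ∈ E) {U Vv W : V}
    (hU : U ∈ E) (hV : Vv ∈ E) (hW : W ∈ E) : PiT J U Vv W ∈ E := by
  have := hJE _ hU; have := hJE _ hV; have := hJE _ hW
  unfold PiT
  apply_rules [Submodule.smul_mem, Submodule.add_mem, Submodule.sub_mem]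

section InvariantSubspace

variable {V : Type*} [NormedAddCommGroup V] [InnerProductSpace ℝ V]
  {J : V →ₗ[ℝ] V} (hJ2 : ∀ X : V, J (J X) = -X) (hJg : ∀ X Y : V, ⟪J X, J Y⟫ = ⟪X, Y⟫)
  {E : Submodule ℝ V} (hJE : ∀ X ∈ E, J X ∈ E)
include hJ2 hJg hJE

theorem map_mem_orthogonal : ∀ x ∈ Eᗮ, J x ∈ Eᗮ := by
  intro x hx
  rw [Submodule.mem_orthogonal] at hx ⊢
  intro u hu
  rw [← neg_eq_zero, ← inner_map_left_eq_neg hJ2 hJg]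
  exact hx _ (hJE u hu)

theorem starProjection_map [E.HasOrthogonalProjection] (x : V) :
    E.starProjection (J x) = J (E.starProjection x) :=
  Submodule.eq_starProjection_of_mem_orthogonal (hJE _ (E.starProjection_apply_mem x))
    (by
      rw [← map_sub]
      exact map_mem_orthogonal hJ2 hJg hJE _ (E.sub_starProjection_mem_orthogonal x))

end InvariantSubspace

section RestrictedPiT

variable {V : Type*} [NormedAddCommGroup V] [InnerProductSpace ℝ V]

def PiTOn (J : V →ₗ[ℝ] V) (E : Submodule ℝ V) [E.HasOrthogonalProjection]
    (U Vv W : V) : V :=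
  PiT J (E.starProjection U) (E.starProjection Vv) (E.starProjection W)

variable {J : V →ₗ[ℝ] V} {E : Submodule ℝ V} [E.HasOrthogonalProjection]

theorem PiTOn_starProjection (U Vv W : V) :
    PiTOn J E U Vv (E.starProjection W) = PiTOn J E U Vv W := by
  rw [PiTOn, Submodule.starProjection_starProjection, PiTOn]

theorem PiTOn_mem (hJE : ∀ X ∈ E, J X ∈ E) (U Vv W : V) : PiTOn J E U Vv W ∈ E :=
  PiT_mem hJE (E.starProjection_apply_mem U) (E.starProjection_apply_mem Vv)
    (E.starProjection_apply_mem W)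

variable (hJ2 : ∀ X : V, J (J X) = -X) (hJg : ∀ X Y : V, ⟪J X, J Y⟫ = ⟪X, Y⟫)
include hJ2 hJg

theorem PiTOn_map (hJE : ∀ X ∈ E, J X ∈ E) (U Vv x : V) :
    PiTOn J E U Vv (J x) = J (PiTOn J E U Vv x) := by
  rw [PiTOn, starProjection_map hJ2 hJg hJE, PiT_map hJ2 hJg, PiTOn]

theorem inner_PiTOn_left (hJE : ∀ X ∈ E, J X ∈ E) (U Vv x y : V) :
    ⟪PiTOn J E U Vv x, y⟫ = -⟪x, PiTOn J E U Vv y⟫ := by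
  have inner_eq_of_mem : ∀ {a : V}, a ∈ E → ∀ b, ⟪a, b⟫ = ⟪a, E.starProjection b⟫ :=
    fun ha b => by
      rw [← E.inner_starProjection_left_eq_right, Submodule.starProjection_eq_self_iff.mpr ha]
  rw [inner_eq_of_mem (PiTOn_mem hJE U Vv x), real_inner_comm (PiTOn J E U Vv y),
    inner_eq_of_mem (PiTOn_mem hJE U Vv y), PiTOn, PiTOn, inner_PiT_left hJ2 hJg,
    real_inner_comm]

end RestrictedPiT

section DerivationAction

variable {V : Type*}

-- Sign convention: `kulkarniNomizu g g / 2` is the 4-form `⟪⟪Y,Z⟫X - ⟪X,Z⟫Y, W⟫`.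
def kulkarniNomizu (S T : V → V → ℝ) (x y z w : V) : ℝ :=
  S x w * T y z + S y z * T x w - S x z * T y w - S y w * T x z

def symmTensor (S T : V → V → ℝ) (x y z w : V) : ℝ := S x y * T z w + T x y * S z w

theorem der4_add (A : V → V) (T₁ T₂ : V → V → V → V → ℝ) :
    der4 A (T₁ + T₂) = der4 A T₁ + der4 A T₂ := by
  funext x y z w
  simp only [der4, Pi.add_apply]
  ring

theorem der4_sub (A : V → V) (T₁ T₂ : V → V → V → V → ℝ) :
    der4 A (T₁ - T₂) = der4 A T₁ - der4 A T₂ := by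
  funext x y z w
  simp only [der4, Pi.sub_apply]
  ring

theorem der4_smul (A : V → V) (c : ℝ) (T : V → V → V → V → ℝ) :
    der4 A (c • T) = c • der4 A T := by
  funext x y z w
  simp only [der4, Pi.smul_apply, smul_eq_mul]
  ring

theorem der4_kulkarniNomizu (A : V → V) (S T : V → V → ℝ) :
    der4 A (kulkarniNomizu S T) = kulkarniNomizu (der2 A S) T + kulkarniNomizu S (der2 A T) := by
  funext x y z w
  simp only [der4, der2, kulkarniNomizu, Pi.add_apply]
  ring

theorem der4_symmTensor (A : V → V) (S T : V → V → ℝ) :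
    der4 A (symmTensor S T) = symmTensor (der2 A S) T + symmTensor S (der2 A T) := by
  funext x y z w
  simp only [der4, der2, symmTensor, Pi.add_apply]
  ring

end DerivationAction

section InnerForm

variable {V : Type*} [NormedAddCommGroup V] [InnerProductSpace ℝ V]

def innerForm (L M : V →ₗ[ℝ] V) (x y : V) : ℝ := ⟪L x, M y⟫

theorem der2_innerForm_eq_zero {C : V → V} (hC : ∀ x y, ⟪C x, y⟫ = -⟪x, C y⟫)
    {L M : V →ₗ[ℝ] V} (hL : ∀ x, C (L x) = L (C x)) (hM : ∀ x, C (M x) = M (C x)) :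
    der2 C (innerForm L M) = 0 := by
  funext x y
  rw [der2, innerForm, innerForm, ← hL, ← hM, hC, Pi.zero_apply, Pi.zero_apply]
  ring

theorem der2_sub_smul_innerForm (A B : V → V) (c : ℝ) (L M : V →ₗ[ℝ] V) :
    der2 (fun x => A x - c • B x) (innerForm L M)
      = der2 A (innerForm L M) - c • der2 B (innerForm L M) := by
  funext x y
  simp only [der2, innerForm, map_sub, map_smul, inner_sub_left, inner_sub_right,
    real_inner_smul_left, real_inner_smul_right, Pi.sub_apply, Pi.smul_apply, smul_eq_mul]
  ring

end InnerForm

section Splitting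

variable {J : V →ₗ[ℝ] V} {D : Submodule ℝ V}

def PiTSplit (J : V →ₗ[ℝ] V) (D : Submodule ℝ V) (U Vv W : V) : V :=
  PiTOn J Dᗮ U Vv W - PiTOn J D U Vv W

variable (hJ2 : ∀ X : V, J (J X) = -X) (hJg : ∀ X Y : V, ⟪J X, J Y⟫ = ⟪X, Y⟫)
  (hJD : ∀ X ∈ D, J X ∈ D)
include hJ2 hJg hJD

theorem PiT_sub_two_smul_PhiT (U Vv W : V) :
    PiT J U Vv W - (2 : ℝ) • PhiT J D U Vv W = PiTSplit J D U Vv W := by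
  have proj_left : ∀ x y, ⟪x, D.starProjection y⟫ = ⟪D.starProjection x, y⟫ := fun x y =>
    (D.inner_starProjection_left_eq_right x y).symm
  simp only [PiTSplit, PiTOn, PhiT, PiT, omForm, hForm, projD,
    Submodule.coe_orthogonalProjectionOnto_apply, Submodule.starProjection_orthogonal_val,
    map_sub, ← starProjection_map hJ2 hJg hJD, Submodule.starProjection_starProjection,
    inner_sub_left, inner_sub_right, proj_left]
  module

theorem inner_PiTSplit_left (U Vv x y : V) :
    ⟪PiTSplit J D U Vv x, y⟫ = -⟪x, PiTSplit J D U Vv y⟫ := by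
  simp only [PiTSplit, inner_sub_left, inner_sub_right, inner_PiTOn_left hJ2 hJg hJD,
    inner_PiTOn_left hJ2 hJg (map_mem_orthogonal hJ2 hJg hJD)]
  ring

theorem PiTSplit_map (U Vv x : V) : PiTSplit J D U Vv (J x) = J (PiTSplit J D U Vv x) := by
  rw [PiTSplit, PiTSplit, map_sub, PiTOn_map hJ2 hJg hJD,
    PiTOn_map hJ2 hJg (map_mem_orthogonal hJ2 hJg hJD)]

theorem PiTSplit_starProjection (U Vv x : V) :
    PiTSplit J D U Vv (D.starProjection x) = D.starProjection (PiTSplit J D U Vv x) := by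
  have h0 : PiTOn J Dᗮ U Vv (D.starProjection x) = 0 := by
    rw [← PiTOn_starProjection, Submodule.starProjection_orthogonal_val,
      Submodule.starProjection_starProjection, sub_self]
    simp [PiTOn, PiT]
  rw [PiTSplit, PiTSplit, h0, PiTOn_starProjection, map_sub,
    D.starProjection_apply_eq_zero_iff.mpr (PiTOn_mem (map_mem_orthogonal hJ2 hJg hJD) U Vv x),
    Submodule.starProjection_eq_self_iff.mpr (PiTOn_mem hJD U Vv x)]

theorem der2_PiT_eq_two_smul_der2_PhiT (U Vv : V) {L M : V →ₗ[ℝ] V}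
    (hL : ∀ x, PiTSplit J D U Vv (L x) = L (PiTSplit J D U Vv x))
    (hM : ∀ x, PiTSplit J D U Vv (M x) = M (PiTSplit J D U Vv x)) :
    der2 (PiT J U Vv) (innerForm L M) = (2 : ℝ) • der2 (PhiT J D U Vv) (innerForm L M) := by
  have h := der2_sub_smul_innerForm (PiT J U Vv) (PhiT J D U Vv) 2 L M
  rw [funext (PiT_sub_two_smul_PhiT hJ2 hJg hJD U Vv),
    der2_innerForm_eq_zero (inner_PiTSplit_left hJ2 hJg hJD U Vv) hL hM] at h
  exact sub_eq_zero.mp h.symm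

end Splitting

section FormDecomposition

variable {J : V →ₗ[ℝ] V} {D : Submodule ℝ V}

theorem form4_PhiT :
    form4 (PhiT J D) = (1 / 8 : ℝ) •
      (kulkarniNomizu (innerForm LinearMap.id LinearMap.id)
          (innerForm D.starProjection D.starProjection)
        + kulkarniNomizu (innerForm J LinearMap.id)
          (innerForm (D.starProjection ∘ₗ J) D.starProjection)
        - (2 : ℝ) • symmTensor (innerForm J LinearMap.id)
          (innerForm (D.starProjection ∘ₗ J) D.starProjection)) := by
  have proj_right : ∀ x y, ⟪D.starProjection x, D.starProjection y⟫ = ⟪D.starProjection x, y⟫ :=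
    fun x y => by
      rw [← D.inner_starProjection_left_eq_right, Submodule.starProjection_starProjection]
  funext x y z w
  simp only [form4, PhiT, omForm, hForm, projD, kulkarniNomizu, symmTensor, innerForm,
    Submodule.coe_orthogonalProjectionOnto_apply, inner_add_left, inner_sub_left,
    real_inner_smul_left, proj_right, Pi.smul_apply, Pi.add_apply, Pi.sub_apply, smul_eq_mul,
    LinearMap.id_apply, LinearMap.comp_apply, ContinuousLinearMap.coe_coe]
  ring

theorem der4_form4_PhiT_eq_smul {A B : V → V} {c : ℝ}
    (hg : der2 A (innerForm LinearMap.id LinearMap.id)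
      = c • der2 B (innerForm LinearMap.id LinearMap.id))
    (hh : der2 A (innerForm D.starProjection D.starProjection)
      = c • der2 B (innerForm D.starProjection D.starProjection))
    (hgJ : der2 A (innerForm J LinearMap.id) = c • der2 B (innerForm J LinearMap.id))
    (hω : der2 A (innerForm (D.starProjection ∘ₗ J) D.starProjection)
      = c • der2 B (innerForm (D.starProjection ∘ₗ J) D.starProjection)) :
    der4 A (form4 (PhiT J D)) = c • der4 B (form4 (PhiT J D)) := by
  simp only [form4_PhiT, der4_smul, der4_add, der4_sub, der4_kulkarniNomizu, der4_symmTensor,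
    hg, hh, hgJ, hω]
  funext x y z w
  simp only [kulkarniNomizu, symmTensor, Pi.smul_apply, Pi.add_apply, Pi.sub_apply, smul_eq_mul]
  ring

end FormDecomposition

theorem stmt_4_general {V : Type*} [NormedAddCommGroup V] [InnerProductSpace ℝ V]
    [FiniteDimensional ℝ V]
    (J : V →ₗ[ℝ] V) (hJ2 : ∀ X : V, J (J X) = -X)
    (hJg : ∀ X Y : V, ⟪J X, J Y⟫ = ⟪X, Y⟫)
    (D : Submodule ℝ V)
    (hJD : ∀ X ∈ D, J X ∈ D) :
    ∀ U Vv X Y Z W : V,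
      dotRS (PiT J) (PhiT J D) U Vv X Y Z W
        = 2 * dotRS (PhiT J D) (PhiT J D) U Vv X Y Z W := by
  intro U Vv X Y Z W
  have hπ := PiTSplit_starProjection hJ2 hJg hJD U Vv
  have hJ := PiTSplit_map hJ2 hJg hJD U Vv
  have key : der4 (PiT J U Vv) (form4 (PhiT J D))
      = (2 : ℝ) • der4 (PhiT J D U Vv) (form4 (PhiT J D)) :=
    der4_form4_PhiT_eq_smul
      (der2_PiT_eq_two_smul_der2_PhiT hJ2 hJg hJD U Vv (fun _ => rfl) (fun _ => rfl))
      (der2_PiT_eq_two_smul_der2_PhiT hJ2 hJg hJD U Vv hπ hπ)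
      (der2_PiT_eq_two_smul_der2_PhiT hJ2 hJg hJD U Vv hJ (fun _ => rfl))
      (der2_PiT_eq_two_smul_der2_PhiT hJ2 hJg hJD U Vv (fun x => by simp [hπ, hJ]) hπ)
  rw [dotRS, dotRS, key]
  rfl

theorem stmt_4 {V : Type*} [NormedAddCommGroup V] [InnerProductSpace ℝ V]
    [FiniteDimensional ℝ V]
    (J : V →ₗ[ℝ] V) (hJ2 : ∀ X : V, J (J X) = -X)
    (hJg : ∀ X Y : V, ⟪J X, J Y⟫ = ⟪X, Y⟫)
    (D : Submodule ℝ V) (hD2 : Module.finrank ℝ ↥D = 2)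
    (hJD : ∀ X ∈ D, J X ∈ D) :
    ∀ U Vv X Y Z W : V,
      dotRS (PiT J) (PhiT J D) U Vv X Y Z W
        = 2 * dotRS (PhiT J D) (PhiT J D) U Vv X Y Z W :=
  stmt_4_general J hJ2 hJg D hJD
end
end

section
/- For all U, V ∈ V, the derivation actions of the endomorphisms Π(U,V) and 2Φ(U,V) agree on the bilinear form ω: (Π(U,V)).ω = 2(Φ(U,V)).ω. -/
open scoped RealInnerProductSpace

noncomputable section

variable {V : Type*} [NormedAddCommGroup V] [InnerProductSpace ℝ V] [FiniteDimensional ℝ V]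

/-!
Because `D` is `J`-invariant and `J` is skew-adjoint, `Dᗮ` is `J`-invariant too, so `π` commutes
with `J` and `ω(X, Y) = ⟪J (π X), Y⟫`. Both sides then expand into polynomials in the inner
products `⟪a, b⟫`, `⟪J a, b⟫`, `⟪π a, b⟫`, `⟪J (π a), b⟫` of `U, V, X, Y`; after the last two are
brought to a common normal form by their (anti)symmetry, the two polynomials coincide.
-/

section

variable {E : Type*} [NormedAddCommGroup E] [InnerProductSpace ℝ E]

theorem inner_map_right_eq_neg_of_sq_eq_neg {J : E →ₗ[ℝ] E} (hJ2 : ∀ X, J (J X) = -X)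
    (hJg : ∀ X Y, ⟪J X, J Y⟫ = ⟪X, Y⟫) (X Y : E) : ⟪X, J Y⟫ = -⟪J X, Y⟫ := by
  simpa [hJ2] using (hJg X (J Y)).symm

theorem map_mem_orthogonal_of_inner_map_right_eq_neg {J : E →ₗ[ℝ] E}
    (hJ : ∀ X Y, ⟪X, J Y⟫ = -⟪J X, Y⟫) {K : Submodule ℝ E} (hJK : ∀ X ∈ K, J X ∈ K)
    {w : E} (hw : w ∈ Kᗮ) : J w ∈ Kᗮ := by
  intro d hd
  rw [hJ, Submodule.inner_right_of_mem_orthogonal (hJK d hd) hw, neg_zero]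

variable (K : Submodule ℝ E) [K.HasOrthogonalProjection]

theorem starProjection_starProjection_apply (X : E) :
    K.starProjection (K.starProjection X) = K.starProjection X :=
  K.starProjection_eq_self_iff.2 (K.starProjection_apply_mem X)

theorem starProjection_map_of_inner_map_right_eq_neg {J : E →ₗ[ℝ] E}
    (hJ : ∀ X Y, ⟪X, J Y⟫ = -⟪J X, Y⟫) (hJK : ∀ X ∈ K, J X ∈ K) (X : E) :
    K.starProjection (J X) = J (K.starProjection X) := by
  refine K.eq_starProjection_of_mem_orthogonal (hJK _ (K.starProjection_apply_mem X)) ?_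
  rw [← map_sub]
  exact map_mem_orthogonal_of_inner_map_right_eq_neg hJ hJK (K.sub_starProjection_mem_orthogonal X)

end

theorem projD_apply (D : Submodule ℝ V) (X : V) : projD D X = D.starProjection X := rfl

theorem hForm_eq_inner_starProjection (D : Submodule ℝ V) (X Y : V) :
    hForm D X Y = ⟪D.starProjection X, Y⟫ := by
  rw [hForm, projD_apply, projD_apply, D.inner_starProjection_left_eq_right,
    starProjection_starProjection_apply, D.inner_starProjection_left_eq_right]

theorem omForm_eq_inner_map_starProjection {J : V →ₗ[ℝ] V} (hJ : ∀ X Y, ⟪X, J Y⟫ = -⟪J X, Y⟫)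
    {D : Submodule ℝ V} (hJD : ∀ X ∈ D, J X ∈ D) (X Y : V) :
    omForm J D X Y = ⟪J (D.starProjection X), Y⟫ := by
  rw [omForm, hForm_eq_inner_starProjection, starProjection_map_of_inner_map_right_eq_neg D hJ hJD]

theorem stmt_7_general {V : Type*} [NormedAddCommGroup V] [InnerProductSpace ℝ V]
    [FiniteDimensional ℝ V]
    (J : V →ₗ[ℝ] V) (hJ2 : ∀ X : V, J (J X) = -X)
    (hJg : ∀ X Y : V, ⟪J X, J Y⟫ = ⟪X, Y⟫)
    (D : Submodule ℝ V)
    (hJD : ∀ X ∈ D, J X ∈ D) :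
    ∀ U Vv X Y : V,
      der2 (PiT J U Vv) (omForm J D) X Y
        = 2 * der2 (PhiT J D U Vv) (omForm J D) X Y := by
  intro U Vv X Y
  have hJ := inner_map_right_eq_neg_of_sq_eq_neg hJ2 hJg
  have hP (a b : V) : ⟪D.starProjection a, b⟫ = ⟪D.starProjection b, a⟫ := by
    rw [D.inner_starProjection_left_eq_right, real_inner_comm]
  have hQ (a b : V) : ⟪J (D.starProjection a), b⟫ = -⟪J (D.starProjection b), a⟫ := by
    rw [← starProjection_map_of_inner_map_right_eq_neg D hJ hJD,
      D.inner_starProjection_left_eq_right, real_inner_comm, hJ]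
  simp only [der2, PiT, PhiT, omForm_eq_inner_map_starProjection hJ hJD,
    hForm_eq_inner_starProjection, projD_apply,
    starProjection_map_of_inner_map_right_eq_neg D hJ hJD, map_add, map_sub, map_smul, starProjection_starProjection_apply, hJ2,
    inner_add_left, inner_add_right, inner_sub_left, inner_sub_right, inner_neg_left,
    real_inner_smul_left, real_inner_smul_right, hJg, ← D.inner_starProjection_left_eq_right]
  simp only [hP X U, hP X Vv, hQ X U, hQ X Vv]
  ring

theorem stmt_7 {V : Type*} [NormedAddCommGroup V] [InnerProductSpace ℝ V]
    [FiniteDimensional ℝ V]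
    (J : V →ₗ[ℝ] V) (hJ2 : ∀ X : V, J (J X) = -X)
    (hJg : ∀ X Y : V, ⟪J X, J Y⟫ = ⟪X, Y⟫)
    (D : Submodule ℝ V) (hD2 : Module.finrank ℝ ↥D = 2)
    (hJD : ∀ X ∈ D, J X ∈ D) :
    ∀ U Vv X Y : V,
      der2 (PiT J U Vv) (omForm J D) X Y
        = 2 * der2 (PhiT J D U Vv) (omForm J D) X Y :=
  stmt_7_general J hJ2 hJg D hJD
end
end

section
/- The tensors Π and Φ satisfy the relation 2(Φ.Φ) = Φ.Π + Π.Φ. -/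
open scoped RealInnerProductSpace

noncomputable section

variable {V : Type*} [NormedAddCommGroup V] [InnerProductSpace ℝ V] [FiniteDimensional ℝ V]

/-! Call an endomorphism admissible if it is skew and commutes with `J`. `Π` is built from `⟪·,·⟫`
and `⟪J·,·⟫` only, so every admissible `A` annihilates it: `A.Π₀ = 0`; `Φ` also involves `π`, so it
is annihilated by the admissible `A` that commute with `π`. Each `Φ(U,V)` is admissible, whence
`Φ.Π = 0`; and `2Φ(U,V) − Π(U,V)` is admissible and commutes with `π`, whence
`2 Φ.Φ − Π.Φ = (2Φ − Π).Φ = 0`. -/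

section ComplexStructure

variable {E : Type*} [NormedAddCommGroup E] [InnerProductSpace ℝ E]

lemma inner_J_left_eq_neg {J : E →ₗ[ℝ] E} (hJ2 : ∀ X : E, J (J X) = -X)
    (hJg : ∀ X Y : E, ⟪J X, J Y⟫ = ⟪X, Y⟫) (a b : E) : ⟪J a, b⟫ = -⟪a, J b⟫ := by
  rw [← hJg, hJ2, inner_neg_left]

lemma inner_J_right_antisymm {J : E →ₗ[ℝ] E} (hJ2 : ∀ X : E, J (J X) = -X)
    (hJg : ∀ X Y : E, ⟪J X, J Y⟫ = ⟪X, Y⟫) (a b : E) : ⟪a, J b⟫ = -⟪b, J a⟫ := by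
  rw [← inner_J_left_eq_neg hJ2 hJg, real_inner_comm]

lemma Submodule.starProjection_starProjection_apply (K : Submodule ℝ E)
    [K.HasOrthogonalProjection] (x : E) :
    K.starProjection (K.starProjection x) = K.starProjection x :=
  K.starProjection_eq_self_iff.mpr (K.starProjection_apply_mem x)

/-- A skew map preserving `K` also preserves `Kᗮ`, hence commutes with the projection onto `K`. -/
lemma commute_starProjection_of_skew {J : E →ₗ[ℝ] E} (hskew : ∀ a b : E, ⟪J a, b⟫ = -⟪a, J b⟫)
    (K : Submodule ℝ E) [K.HasOrthogonalProjection] (hJK : ∀ X ∈ K, J X ∈ K) :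
    Function.Commute J K.starProjection := by
  intro a
  refine (K.eq_starProjection_of_mem_of_inner_eq_zero (hJK _ (K.starProjection_apply_mem a))
    fun w hw => ?_).symm
  rw [← map_sub, hskew, neg_eq_zero]
  exact K.starProjection_inner_eq_zero a _ (hJK w hw)

lemma inner_J_starProjection_right_antisymm {J : E →ₗ[ℝ] E} (hJ2 : ∀ X : E, J (J X) = -X)
    (hJg : ∀ X Y : E, ⟪J X, J Y⟫ = ⟪X, Y⟫) {K : Submodule ℝ E} [K.HasOrthogonalProjection]
    (hJK : ∀ X ∈ K, J X ∈ K) (a b : E) :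
    ⟪a, J (K.starProjection b)⟫ = -⟪b, J (K.starProjection a)⟫ := by
  rw [inner_J_right_antisymm hJ2 hJg, K.inner_starProjection_left_eq_right,
    ← (commute_starProjection_of_skew (inner_J_left_eq_neg hJ2 hJg) K hJK).eq, real_inner_comm]

lemma skew_smul_sub {A B : E → E} (hA : ∀ a b : E, ⟪A a, b⟫ = -⟪a, A b⟫)
    (hB : ∀ a b : E, ⟪B a, b⟫ = -⟪a, B b⟫) (c : ℝ) (a b : E) :
    ⟪c • A a - B a, b⟫ = -⟪a, c • A b - B b⟫ := by
  rw [inner_sub_left, inner_sub_right, real_inner_smul_left, real_inner_smul_right, hA, hB]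
  ring

lemma Function.Commute.smul_sub {L : E →ₗ[ℝ] E} {A B : E → E} (hA : Function.Commute L A)
    (hB : Function.Commute L B) (c : ℝ) : Function.Commute L fun x => c • A x - B x := by
  intro x
  simp only [map_sub, map_smul, hA.eq, hB.eq]

lemma der4_form4_PiT_eq_zero (J : E →ₗ[ℝ] E) {A : E → E}
    (hA : ∀ a b : E, ⟪A a, b⟫ = -⟪a, A b⟫) (hAJ : Function.Commute J A) (X Y Z W : E) :
    der4 A (form4 (PiT J)) X Y Z W = 0 := by
  simp only [der4, form4, PiT, inner_add_left, inner_sub_left, real_inner_smul_left, hAJ.eq, hA]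
  ring

lemma inner_PiT_left_s11 {J : E →ₗ[ℝ] E} (hJ2 : ∀ X : E, J (J X) = -X)
    (hJg : ∀ X Y : E, ⟪J X, J Y⟫ = ⟪X, Y⟫) (U Vv a b : E) :
    ⟪PiT J U Vv a, b⟫ = -⟪a, PiT J U Vv b⟫ := by
  rw [real_inner_comm (PiT J U Vv b) a]
  simp only [PiT, inner_add_left, inner_sub_left, real_inner_smul_left]
  linear_combination (-(1/2) * ⟪J U, Vv⟫) *
    (inner_J_left_eq_neg hJ2 hJg a b + real_inner_comm a (J b))

lemma commute_PiT {J : E →ₗ[ℝ] E} (hJ2 : ∀ X : E, J (J X) = -X)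
    (hJg : ∀ X Y : E, ⟪J X, J Y⟫ = ⟪X, Y⟫) (U Vv : E) : Function.Commute J (PiT J U Vv) := by
  intro x
  simp only [PiT, map_smul, map_add, map_sub, map_neg, hJ2, hJg, inner_J_left_eq_neg hJ2 hJg,
    neg_smul, smul_neg]
  module

end ComplexStructure

lemma projD_eq_starProjection (D : Submodule ℝ V) : projD D = D.starProjection :=
  funext fun X => (D.starProjection_apply X).symm

lemma inner_PhiT_left {J : V →ₗ[ℝ] V} (hJ2 : ∀ X : V, J (J X) = -X)
    (hJg : ∀ X Y : V, ⟪J X, J Y⟫ = ⟪X, Y⟫) {D : Submodule ℝ V} (hJD : ∀ X ∈ D, J X ∈ D)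
    (U Vv a b : V) : ⟪PhiT J D U Vv a, b⟫ = -⟪a, PhiT J D U Vv b⟫ := by
  have hJP := commute_starProjection_of_skew (inner_J_left_eq_neg hJ2 hJg) D hJD
  rw [real_inner_comm (PhiT J D U Vv b) a]
  simp only [PhiT, hForm, omForm, projD_eq_starProjection, inner_add_left, inner_sub_left,
    real_inner_smul_left, ← hJP.eq, D.inner_starProjection_left_eq_right,
    D.starProjection_starProjection_apply, inner_J_left_eq_neg hJ2 hJg]
  linear_combination (-⟪U, J Vv⟫ / 4) * inner_J_starProjection_right_antisymm hJ2 hJg hJD a b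
    - ⟪U, J (D.starProjection Vv)⟫ / 4 * inner_J_right_antisymm hJ2 hJg a b

lemma commute_PhiT {J : V →ₗ[ℝ] V} (hJ2 : ∀ X : V, J (J X) = -X)
    (hJg : ∀ X Y : V, ⟪J X, J Y⟫ = ⟪X, Y⟫) {D : Submodule ℝ V} (hJD : ∀ X ∈ D, J X ∈ D)
    (U Vv : V) : Function.Commute J (PhiT J D U Vv) := by
  have hJP := commute_starProjection_of_skew (inner_J_left_eq_neg hJ2 hJg) D hJD
  intro x
  simp only [PhiT, hForm, omForm, projD_eq_starProjection, map_smul, map_add, map_sub, map_neg,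
    ← hJP.eq, D.inner_starProjection_left_eq_right, D.starProjection_starProjection_apply, hJ2,
    hJg, inner_J_left_eq_neg hJ2 hJg, neg_smul, smul_neg]
  module

lemma commute_projD_two_smul_PhiT_sub_PiT {J : V →ₗ[ℝ] V} (hJ2 : ∀ X : V, J (J X) = -X)
    (hJg : ∀ X Y : V, ⟪J X, J Y⟫ = ⟪X, Y⟫) {D : Submodule ℝ V} (hJD : ∀ X ∈ D, J X ∈ D)
    (U Vv : V) : Function.Commute (projD D) fun x => (2 : ℝ) • PhiT J D U Vv x - PiT J U Vv x := by
  have hJP := commute_starProjection_of_skew (inner_J_left_eq_neg hJ2 hJg) D hJD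
  intro x
  simp only [PhiT, PiT, hForm, omForm, projD_eq_starProjection, map_smul, map_add, map_sub,
    map_neg, ← hJP.eq, D.inner_starProjection_left_eq_right, D.starProjection_starProjection_apply,
    inner_J_left_eq_neg hJ2 hJg, neg_smul]
  module

lemma der4_form4_PhiT_eq_zero (J : V →ₗ[ℝ] V) (D : Submodule ℝ V) {A : V → V}
    (hA : ∀ a b : V, ⟪A a, b⟫ = -⟪a, A b⟫) (hAJ : Function.Commute J A)
    (hAP : Function.Commute (projD D) A) (X Y Z W : V) :
    der4 A (form4 (PhiT J D)) X Y Z W = 0 := by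
  simp only [der4, form4, PhiT, hForm, omForm, inner_add_left, inner_sub_left,
    real_inner_smul_left, hAJ.eq, hAP.eq, hA]
  ring

lemma der4_form4_PhiT_smul_sub (J : V →ₗ[ℝ] V) (D : Submodule ℝ V) (c : ℝ) (A B : V → V)
    (X Y Z W : V) :
    der4 (fun x => c • A x - B x) (form4 (PhiT J D)) X Y Z W
      = c * der4 A (form4 (PhiT J D)) X Y Z W - der4 B (form4 (PhiT J D)) X Y Z W := by
  simp only [der4, form4, PhiT, hForm, omForm, projD_eq_starProjection, map_sub, map_smul,
    inner_sub_left, inner_sub_right, inner_add_left, real_inner_smul_left,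
    real_inner_smul_right]
  ring

theorem stmt_11_general {V : Type*} [NormedAddCommGroup V] [InnerProductSpace ℝ V]
    [FiniteDimensional ℝ V]
    (J : V →ₗ[ℝ] V) (hJ2 : ∀ X : V, J (J X) = -X)
    (hJg : ∀ X Y : V, ⟪J X, J Y⟫ = ⟪X, Y⟫)
    (D : Submodule ℝ V)
    (hJD : ∀ X ∈ D, J X ∈ D) :
    ∀ U Vv X Y Z W : V,
      2 * dotRS (PhiT J D) (PhiT J D) U Vv X Y Z W
        = dotRS (PhiT J D) (PiT J) U Vv X Y Z W
          + dotRS (PiT J) (PhiT J D) U Vv X Y Z W := by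
  intro U Vv X Y Z W
  have hPhi := inner_PhiT_left hJ2 hJg hJD U Vv
  have hPi := inner_PiT_left_s11 hJ2 hJg U Vv
  have hPhiJ := commute_PhiT hJ2 hJg hJD U Vv
  have hPhiPi : dotRS (PhiT J D) (PiT J) U Vv X Y Z W = 0 :=
    der4_form4_PiT_eq_zero J hPhi hPhiJ X Y Z W
  have hTwoPhiSubPi : der4 (fun x => (2 : ℝ) • PhiT J D U Vv x - PiT J U Vv x)
      (form4 (PhiT J D)) X Y Z W = 0 :=
    der4_form4_PhiT_eq_zero J D (skew_smul_sub hPhi hPi 2)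
      (hPhiJ.smul_sub (commute_PiT hJ2 hJg U Vv) 2)
      (commute_projD_two_smul_PhiT_sub_PiT hJ2 hJg hJD U Vv) X Y Z W
  rw [der4_form4_PhiT_smul_sub] at hTwoPhiSubPi
  rw [hPhiPi, zero_add]
  unfold dotRS
  linarith

theorem stmt_11 {V : Type*} [NormedAddCommGroup V] [InnerProductSpace ℝ V]
    [FiniteDimensional ℝ V]
    (J : V →ₗ[ℝ] V) (hJ2 : ∀ X : V, J (J X) = -X)
    (hJg : ∀ X Y : V, ⟪J X, J Y⟫ = ⟪X, Y⟫)
    (D : Submodule ℝ V) (hD2 : Module.finrank ℝ ↥D = 2)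
    (hJD : ∀ X ∈ D, J X ∈ D) :
    ∀ U Vv X Y Z W : V,
      2 * dotRS (PhiT J D) (PhiT J D) U Vv X Y Z W
        = dotRS (PhiT J D) (PiT J) U Vv X Y Z W
          + dotRS (PiT J) (PhiT J D) U Vv X Y Z W :=
  stmt_11_general J hJ2 hJg D hJD
end
end
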